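/- arXiv:1610.04090 — 4 statements merged into one kernel-verified Lean document; each statement's English description precedes it below -/
import Mathlib

section
/- For every integer q ≥ 1, every integer p coprime to q, and every natural number m, the sum over k from m+1 to m+q of sgn(sin(kπp/q))·cos(kπp/q) equals 0. -/
open Real Finset

/-!
As a function of `k ∈ ℤ`, the summand is odd and `q`-periodic, because `x ↦ sgn (sin x) * cos x`
is odd and `π`-periodic. The sum of a `q`-periodic function over `q` consecutive integers does not
depend on where the block starts, and the reflection `k ↦ -k` turns it into minus such a sum, so
for an odd function it vanishes.
-/

namespace Function

variable {M : Type*} {f : ℤ → M} {q : ℕ}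

theorem Periodic.sum_range_add_one [AddCommMonoid M] (hf : Periodic f q) (a : ℤ) :
    ∑ i ∈ range q, f (a + 1 + i) = ∑ i ∈ range q, f (a + i) := by
  cases q with
  | zero => simp
  | succ n =>
    rw [sum_range_succ, sum_range_succ', Nat.cast_zero, add_zero, ← hf a]
    congr 1
    · exact sum_congr rfl fun i _ => by push_cast; ring_nf
    · push_cast; ring_nf

theorem Periodic.sum_range_add [AddCommMonoid M] (hf : Periodic f q) (a : ℤ) :
    ∑ i ∈ range q, f (a + i) = ∑ i ∈ range q, f i := by
  induction a using Int.induction_on with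
  | zero => simp
  | succ n ih => rw [hf.sum_range_add_one, ih]
  | pred n ih => rw [← ih, ← hf.sum_range_add_one, sub_add_cancel]

theorem Odd.sum_range_add_eq_zero_of_periodic [AddCommGroup M] [IsAddTorsionFree M]
    (hodd : Function.Odd f) (hf : Periodic f q) (a : ℤ) :
    ∑ i ∈ range q, f (a + i) = 0 := by
  have reflect : ∑ i ∈ range q, f (a + i) = -∑ i ∈ range q, f (1 - q - a + i) := by
    rw [← sum_range_reflect, ← sum_neg_distrib]
    refine sum_congr rfl fun i hi => ?_
    rw [← hodd]
    congr 1
    rw [mem_range] at hi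
    push_cast [Nat.sub_sub, Nat.cast_sub (show 1 + i ≤ q by omega)]
    ring
  rw [hf.sum_range_add] at reflect ⊢
  exact self_eq_neg.mp (reflect.trans (congrArg _ (hf.sum_range_add _)))

end Function

theorem sign_sin_mul_cos_periodic : Function.Periodic (fun x => sign (sin x) * cos x) π := by
  intro x
  simp [sin_add_pi, cos_add_pi, sign_neg]

theorem sign_sin_mul_cos_odd : Function.Odd (fun x => sign (sin x) * cos x) := by
  intro x
  simp [sign_neg]

theorem stmt_1_general (p : ℤ) (q : ℕ) (m : ℕ) :
    ∑ k ∈ Finset.Icc (m + 1) (m + q),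
      Real.sign (Real.sin (k * Real.pi * p / q)) * Real.cos (k * Real.pi * p / q) = 0 := by
  set h : ℤ → ℝ := fun k => sign (sin (k * π * p / q)) * cos (k * π * p / q)
  have hodd : Function.Odd h := fun k => by
    simpa [h, neg_mul, neg_div] using sign_sin_mul_cos_odd (k * π * p / q)
  have hper : Function.Periodic h q := fun k => by
    rcases eq_or_ne q 0 with rfl | hq
    · simp
    · have : ((k + q : ℤ) : ℝ) * π * p / q = k * π * p / q + p * π := by
        push_cast; field_simp
      simp only [h, this]
      exact sign_sin_mul_cos_periodic.int_mul p _
  calc _ = ∑ i ∈ range q, h ((m + 1 : ℕ) + i) := by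
        rw [← Ico_add_one_right_eq_Icc, sum_Ico_eq_sum_range, show m + q + 1 - (m + 1) = q by omega]
        push_cast [h]; rfl
    _ = 0 := hodd.sum_range_add_eq_zero_of_periodic hper _

theorem stmt_1 (p : ℤ) (q : ℕ) (hq : 1 ≤ q) (hpq : Int.gcd p q = 1) (m : ℕ) :
    ∑ k ∈ Finset.Icc (m + 1) (m + q),
      Real.sign (Real.sin (k * Real.pi * p / q)) * Real.cos (k * Real.pi * p / q) = 0 :=
  stmt_1_general p q m
end

section
/- For every integer q ≥ 1 and every integer n with 1 ≤ n ≤ q, the partial sum ∑_{k=1}^{n} cos(kπ/q) is at most q/2. -/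
open Real Finset

theorem stmt_2 (q n : ℕ) (hq : 1 ≤ q) (hn : 1 ≤ n) (hnq : n ≤ q) :
    ∑ k ∈ Finset.Icc 1 n, Real.cos (k * Real.pi / q) ≤ (q : ℝ) / 2 := by
  have hq0 : (0:ℝ) < q := by positivity
  set m := q / 2 with hm
  have hbound : ∀ s : ℕ, s ≤ m → ∑ k ∈ Finset.Ioc 0 s, Real.cos (k * Real.pi / q) ≤ (q:ℝ)/2 := by
    intro s hs
    calc ∑ k ∈ Finset.Ioc 0 s, Real.cos (k * Real.pi / q)
        ≤ ∑ k ∈ Finset.Ioc 0 s, 1 := Finset.sum_le_sum (fun k _ => Real.cos_le_one _)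
      _ = (s : ℝ) := by simp
      _ ≤ (q:ℝ)/2 := by
          rw [le_div_iff₀ (by norm_num : (0:ℝ) < 2)]
          have : 2 * s ≤ q := by omega
          exact_mod_cast by linarith [this]
  rw [show Finset.Icc 1 n = Finset.Ioc 0 n from rfl]
  by_cases h : n ≤ m
  · exact hbound n h
  · push_neg at h
    have hmn : m ≤ n := le_of_lt h
    rw [← Finset.sum_Ioc_consecutive _ (Nat.zero_le m) hmn]
    have h2 : ∑ k ∈ Finset.Ioc m n, Real.cos (k * Real.pi / q) ≤ 0 := by
      apply Finset.sum_nonpos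
      intro k hk
      rw [Finset.mem_Ioc] at hk
      apply Real.cos_nonpos_of_pi_div_two_le_of_le
      · rw [div_le_div_iff₀ (by norm_num : (0:ℝ) < 2) hq0]
        have : q ≤ 2 * k := by omega
        have := (Nat.cast_le (α := ℝ)).2 this
        push_cast at this
        nlinarith [Real.pi_pos]
      · have hk2 : (k:ℝ) ≤ q := by exact_mod_cast hk.2.trans hnq
        have : (k:ℝ) * Real.pi / q ≤ Real.pi := by
          rw [div_le_iff₀ hq0]
          nlinarith [Real.pi_pos]
        nlinarith [Real.pi_pos]
    linarith [hbound m le_rfl]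
end

section
/- For all integers q ≥ 1, p coprime to q, and every natural number n ≥ 1, the partial sum ∑_{k=1}^{n} sgn(sin(kπp/q))·cos(kπp/q) is bounded below by -q/2. -/
open Real Finset Function

/-!
The function `h x = sign (sin x) * cos x` is odd and `π`-periodic, so `g k = h (k π p / q)` is
`q`-periodic with `g (q - k) = -g k`. Hence the terms over a period cancel and the partial sums
`S n = ∑_{k < n} g k` are `q`-periodic. For `r < q`, `|g| ≤ 1` gives both `S r ≥ -r` and
`S r = -∑_{r ≤ k < q} g k ≥ -(q - r)`; averaging the two bounds yields `S r ≥ -q/2`.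
-/

section PartialSums

variable {g : ℕ → ℝ} {q : ℕ}

theorem Function.Periodic.sum_range_eq_zero_of_map_sub (hg : Periodic g q)
    (hrefl : ∀ k ≤ q, g (q - k) = -g k) : ∑ k ∈ range q, g k = 0 := by
  have hgq : g q = 0 := by
    have := hrefl q le_rfl
    rw [Nat.sub_self, ← hg.eq] at this
    linarith
  have hsymm : ∑ k ∈ range (q + 1), g k = ∑ k ∈ range (q + 1), -g k := by
    rw [← sum_range_reflect]
    exact sum_congr rfl fun k hk => by
      rw [Nat.add_sub_cancel, hrefl k (Nat.lt_succ_iff.mp (mem_range.mp hk))]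
  rw [sum_neg_distrib, sum_range_succ, hgq, add_zero] at hsymm
  linarith

theorem Function.Periodic.periodic_sum_range (hg : Periodic g q)
    (hsum : ∑ k ∈ range q, g k = 0) : Periodic (fun n => ∑ k ∈ range n, g k) q := by
  intro n
  induction n with
  | zero => simpa using hsum
  | succ n ih =>
    dsimp only at ih ⊢
    rw [Nat.add_right_comm, sum_range_succ, ih, hg, sum_range_succ]

theorem neg_le_sum_range (hg : ∀ k, |g k| ≤ 1) (n : ℕ) : -(n : ℝ) ≤ ∑ k ∈ range n, g k := by
  simpa using card_nsmul_le_sum (range n) g (-1) fun k _ => neg_le_of_abs_le (hg k)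

theorem sum_Ico_le_sub (hg : ∀ k, |g k| ≤ 1) {m n : ℕ} (hmn : m ≤ n) :
    ∑ k ∈ Ico m n, g k ≤ n - m := by
  simpa [Nat.cast_sub hmn] using sum_le_card_nsmul (Ico m n) g 1 fun k _ => le_of_abs_le (hg k)

theorem Function.Periodic.neg_half_le_sum_range (hq : 0 < q) (hg : Periodic g q)
    (hsum : ∑ k ∈ range q, g k = 0) (hbound : ∀ k, |g k| ≤ 1) (n : ℕ) :
    -((q : ℝ) / 2) ≤ ∑ k ∈ range n, g k := by
  set r := n % q
  have hr : r ≤ q := (Nat.mod_lt n hq).le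
  rw [← (hg.periodic_sum_range hsum).map_mod_nat n]
  have hhead := neg_le_sum_range hbound r
  have htail := sum_Ico_le_sub hbound hr
  have hsplit := sum_range_add_sum_Ico g hr
  rw [hsum] at hsplit
  linarith

end PartialSums

theorem Real.periodic_sign_sin_mul_cos : Periodic (fun x => sign (sin x) * cos x) π := by
  intro x
  simp only [sin_add_pi, cos_add_pi, Real.sign_neg, neg_mul_neg]

theorem Real.odd_sign_sin_mul_cos : (fun x => sign (sin x) * cos x).Odd := by
  intro x
  simp only [sin_neg, cos_neg, Real.sign_neg, neg_mul]

theorem Real.abs_sign_sin_mul_cos_le_one (x : ℝ) : |sign (sin x) * cos x| ≤ 1 := by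
  rw [abs_mul]
  have hsign : |sign (sin x)| ≤ 1 := by
    rcases Real.sign_apply_eq (sin x) with h | h | h <;> simp [h]
  exact mul_le_one₀ hsign (abs_nonneg _) (abs_cos_le_one x)

section Sampling

variable {h : ℝ → ℝ} {c : ℝ}

theorem Function.Periodic.comp_natCast_mul_div {q : ℕ} (hh : Periodic h c) (p : ℤ) (hq : q ≠ 0) :
    Periodic (fun k : ℕ => h (k * c * p / q)) q := fun k => by
  have : ((k + q : ℕ) : ℝ) * c * p / q = k * c * p / q + p * c := by
    push_cast
    field_simp
  simp only [this, hh.int_mul p _]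

theorem Function.Periodic.map_natCast_sub_mul_div_of_odd {q k : ℕ} (hh : Periodic h c)
    (hodd : h.Odd) (p : ℤ) (hq : q ≠ 0) (hk : k ≤ q) :
    h ((q - k : ℕ) * c * p / q) = -h (k * c * p / q) := by
  have : ((q - k : ℕ) : ℝ) * c * p / q = p * c - k * c * p / q := by
    push_cast [hk]
    field_simp
  rw [this, (hh.int_mul p).sub_eq', hodd]

end Sampling

theorem stmt_3_general (p : ℤ) (q : ℕ) (hq : 1 ≤ q)
    (n : ℕ) :
    -((q : ℝ) / 2) ≤ ∑ k ∈ Finset.Icc 1 n,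
      Real.sign (Real.sin (k * Real.pi * p / q)) * Real.cos (k * Real.pi * p / q) := by
  have hq0 : q ≠ 0 := Nat.one_le_iff_ne_zero.mp hq
  have hper := periodic_sign_sin_mul_cos.comp_natCast_mul_div p hq0
  have hsum := hper.sum_range_eq_zero_of_map_sub fun k hk =>
    periodic_sign_sin_mul_cos.map_natCast_sub_mul_div_of_odd odd_sign_sin_mul_cos p hq0 hk
  have := hper.neg_half_le_sum_range hq hsum (fun k => abs_sign_sin_mul_cos_le_one _) (n + 1)
  rw [range_eq_Ico, sum_eq_sum_Ico_succ_bot (by positivity), zero_add,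
    Ico_add_one_right_eq_Icc] at this
  simpa using this

theorem stmt_3 (p : ℤ) (q : ℕ) (hq : 1 ≤ q) (hpq : Int.gcd p q = 1)
    (n : ℕ) (hn : 1 ≤ n) :
    -((q : ℝ) / 2) ≤ ∑ k ∈ Finset.Icc 1 n,
      Real.sign (Real.sin (k * Real.pi * p / q)) * Real.cos (k * Real.pi * p / q) :=
  stmt_3_general p q hq n
end

section
/- Define f_n(x) = ∑_{k=1}^{n} |sin(kπx)|/k. For every rational number p/q in lowest terms with q ≥ 1 and every n ≥ q², the function f_n has a strict local minimum at x = p/q. -/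
noncomputable def f (n : ℕ) (x : ℝ) : ℝ :=
  ∑ k ∈ Finset.Icc 1 n, |Real.sin (k * Real.pi * x)| / k

/-!
Write `x = p/q + t`. For `k ≤ n` and `|t| ≤ 1/(nπ)`, the `k`-th term of `f n` grows by at least
`π t · sign(sin θₖ) cos θₖ - kπ²t²` with `θₖ = kπp/q`, plus `π|t|` when `sin θₖ = 0`, in particular
when `q ∣ k`. The slopes `sign(sin θₖ) cos θₖ` are `q`-periodic in `k` and change sign under
`k ↦ q - k`, so they sum to zero over a period and each partial sum is at most `q - 1` in absolute
value, while `n ≥ q²` provides at least `q` multiples of `q` in `[1, n]`. Hence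
`f n (p/q + t) - f n (p/q) ≥ π|t| - n²π²t² > 0` for small `t ≠ 0`.
-/

open Real Finset Function

/-- The derivative of `|sin|` away from the zeros of `sin`; it vanishes at those zeros. -/
noncomputable def sinSlope (θ : ℝ) : ℝ := SignType.sign (sin θ) * cos θ

lemma sinSlope_periodic : Periodic sinSlope π := by
  intro θ
  simp [sinSlope, sin_add_pi, cos_add_pi, Left.sign_neg]

lemma sinSlope_neg (θ : ℝ) : sinSlope (-θ) = -sinSlope θ := by
  simp [sinSlope, Left.sign_neg]

lemma sinSlope_of_sin_eq_zero {θ : ℝ} (h : sin θ = 0) : sinSlope θ = 0 := by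
  simp [sinSlope, h]

lemma abs_sign_le_one (x : ℝ) : |(SignType.sign x : ℝ)| ≤ 1 := by
  cases SignType.sign x <;> simp

lemma abs_sinSlope_le_one (θ : ℝ) : |sinSlope θ| ≤ 1 := by
  rw [sinSlope, abs_mul]
  exact mul_le_one₀ (abs_sign_le_one _) (abs_nonneg _) (abs_cos_le_one θ)

lemma abs_sin_sub_self_le {h : ℝ} (hh : |h| ≤ 1) : |sin h - h| ≤ h ^ 2 / 2 := by
  have h3 : |h| ^ 3 ≤ h ^ 2 := by
    rw [← sq_abs h]; exact pow_le_pow_of_le_one (abs_nonneg h) hh (by norm_num)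
  have h5 : |h| ^ 5 ≤ h ^ 2 := by
    rw [← sq_abs h]; exact pow_le_pow_of_le_one (abs_nonneg h) hh (by norm_num)
  calc |sin h - h| ≤ |sin h - (h - h ^ 3 / 6)| + |h - h ^ 3 / 6 - h| := abs_sub_le _ _ _
    _ = |sin h - (h - h ^ 3 / 6)| + |h| ^ 3 / 6 := by
        rw [sub_sub_cancel_left, abs_neg, abs_div, abs_pow]; norm_num
    _ ≤ h ^ 2 / 2 := by linarith [sin_bound hh, sq_nonneg h]

lemma abs_sub_sq_le_abs_sin {h : ℝ} (hh : |h| ≤ 1) : |h| - h ^ 2 ≤ |sin h| := by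
  have := abs_sub_abs_le_abs_sub h (sin h)
  rw [abs_sub_comm] at this
  linarith [abs_sin_sub_self_le hh, sq_nonneg h]

lemma sinSlope_mul_sub_sq_le (θ : ℝ) {h : ℝ} (hh : |h| ≤ 1) :
    sinSlope θ * h - h ^ 2 ≤ |sin (θ + h)| - |sin θ| := by
  set s : ℝ := (SignType.sign (sin θ) : ℝ)
  have hssin : s * sin θ = |sin θ| := sign_mul_self _
  have hcos : |sin θ| * (1 - h ^ 2 / 2) ≤ |sin θ| * cos h :=
    mul_le_mul_of_nonneg_left one_sub_sq_div_two_le_cos (abs_nonneg _)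
  have hsin : |sinSlope θ * (sin h - h)| ≤ h ^ 2 / 2 := by
    rw [abs_mul]
    exact (mul_le_of_le_one_left (abs_nonneg _) (abs_sinSlope_le_one θ)).trans
      (abs_sin_sub_self_le hh)
  have hlin : s * sin (θ + h) ≤ |sin (θ + h)| := by
    calc s * sin (θ + h) ≤ |s| * |sin (θ + h)| := by rw [← abs_mul]; exact le_abs_self _
      _ ≤ |sin (θ + h)| := mul_le_of_le_one_left (abs_nonneg _) (abs_sign_le_one _)
  have hexp :
      s * sin (θ + h) = |sin θ| * cos h + sinSlope θ * h + sinSlope θ * (sin h - h) := by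
    rw [sin_add, ← hssin, sinSlope]; ring
  have hsq : |sin θ| * h ^ 2 ≤ h ^ 2 := mul_le_of_le_one_left (sq_nonneg h) (abs_sin_le_one θ)
  linarith [neg_abs_le (sinSlope θ * (sin h - h))]

lemma abs_sub_sq_le_abs_sin_add {θ h : ℝ} (hθ : sin θ = 0) (hh : |h| ≤ 1) :
    |h| - h ^ 2 ≤ |sin (θ + h)| - |sin θ| := by
  have hcos : |cos θ| = 1 := by
    rcases sin_eq_zero_iff_cos_eq.mp hθ with h | h <;> simp [h]
  rw [sin_add, hθ, zero_mul, zero_add, abs_zero, sub_zero, abs_mul, hcos, one_mul]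
  exact abs_sub_sq_le_abs_sin hh

lemma sub_abs_sin_div_ge {k : ℕ} (hk : 0 < k) (α : ℝ) {t : ℝ} (ht : k * π * |t| ≤ 1) :
    π * t * sinSlope (k * π * α) + (if sin (k * π * α) = 0 then π * |t| else 0)
        - k * π ^ 2 * t ^ 2 ≤ |sin (k * π * (α + t))| / k - |sin (k * π * α)| / k := by
  have hkπ : (0 : ℝ) ≤ k * π := by positivity
  have hh : |k * π * t| ≤ 1 := by rwa [abs_mul, abs_of_nonneg hkπ]
  rw [← sub_div, mul_add, le_div_iff₀ (by exact_mod_cast hk)]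
  split_ifs with hθ
  · have := abs_sub_sq_le_abs_sin_add hθ hh
    rw [abs_mul, abs_of_nonneg hkπ] at this
    rw [sinSlope_of_sin_eq_zero hθ]
    linarith
  · have := sinSlope_mul_sub_sq_le (k * π * α) hh
    linarith

lemma f_add_sub_f_ge (n : ℕ) (α : ℝ) {t : ℝ} (ht : n * π * |t| ≤ 1) :
    π * t * ∑ k ∈ Icc 1 n, sinSlope (k * π * α)
        + π * |t| * #((Icc 1 n).filter fun k : ℕ => sin (k * π * α) = 0)
        - n ^ 2 * π ^ 2 * t ^ 2 ≤ f n (α + t) - f n α := by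
  rw [f, f, ← sum_sub_distrib]
  calc _ = ∑ k ∈ Icc 1 n, (π * t * sinSlope (k * π * α)
          + (if sin (k * π * α) = 0 then π * |t| else 0) - n * π ^ 2 * t ^ 2) := by
        rw [sum_sub_distrib, sum_add_distrib, ← mul_sum, sum_ite, sum_const_zero, add_zero,
          sum_const, sum_const, Nat.card_Icc, nsmul_eq_mul, nsmul_eq_mul]
        push_cast
        ring
    _ ≤ _ := by
      refine sum_le_sum fun k hk => ?_
      obtain ⟨hk1, hkn⟩ := mem_Icc.mp hk
      have hkn' : (k : ℝ) ≤ n := by exact_mod_cast hkn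
      have := sub_abs_sin_div_ge hk1 α (le_trans (by gcongr) ht)
      have : (k : ℝ) * π ^ 2 * t ^ 2 ≤ n * π ^ 2 * t ^ 2 := by gcongr
      linarith

section PeriodicSums

variable {g : ℕ → ℝ} {q : ℕ}

lemma sum_range_eq_zero_of_reflect (h : ∀ k ≤ q, g (q - k) = -g k) :
    ∑ k ∈ range (q + 1), g k = 0 := by
  have hrefl := sum_range_reflect g (q + 1)
  have hneg : ∑ k ∈ range (q + 1), g (q - k) = -∑ k ∈ range (q + 1), g k := by
    rw [← sum_neg_distrib]
    exact sum_congr rfl fun k hk => h k (Nat.lt_succ_iff.mp (mem_range.mp hk))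
  rw [Nat.add_sub_cancel, hneg] at hrefl
  linarith

variable (hg : Periodic g q) (hz : ∑ k ∈ range q, g k = 0)
include hg hz

lemma sum_range_mul_eq_zero (m : ℕ) : ∑ k ∈ range (q * m), g k = 0 := by
  induction m with
  | zero => simp
  | succ m ih =>
    rw [Nat.mul_succ, sum_range_add, ih, zero_add, ← hz]
    exact sum_congr rfl fun k _ => by rw [add_comm, mul_comm]; simpa using hg.nat_mul m k

lemma sum_range_eq_sum_range_mod (n : ℕ) :
    ∑ k ∈ range n, g k = ∑ k ∈ range (n % q), g k := by
  conv_lhs => rw [← Nat.div_add_mod n q]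
  rw [sum_range_add, sum_range_mul_eq_zero hg hz, zero_add]
  exact sum_congr rfl fun k _ => by rw [add_comm, mul_comm]; simpa using hg.nat_mul (n / q) k

lemma abs_sum_range_le_of_periodic (hq : 0 < q) (hb : ∀ k, |g k| ≤ 1) (n : ℕ) :
    |∑ k ∈ range n, g k| ≤ q - 1 := by
  rw [sum_range_eq_sum_range_mod hg hz]
  have hr : ((n % q : ℕ) : ℝ) ≤ q - 1 := by
    have := Nat.mod_lt n hq
    rw [le_sub_iff_add_le]; exact_mod_cast this
  calc |∑ k ∈ range (n % q), g k| ≤ ∑ k ∈ range (n % q), |g k| := abs_sum_le_sum_abs _ _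
    _ ≤ ∑ k ∈ range (n % q), (1 : ℝ) := sum_le_sum fun k _ => hb k
    _ ≤ q - 1 := by simpa using hr

end PeriodicSums

lemma abs_sum_sinSlope_le (p : ℤ) {q : ℕ} (hq : 0 < q) (n : ℕ) :
    |∑ k ∈ Icc 1 n, sinSlope (k * π * (p / q))| ≤ q - 1 := by
  set g : ℕ → ℝ := fun k => sinSlope (k * π * (p / q))
  have hq' : (q : ℝ) ≠ 0 := by positivity
  have hper : Periodic g q := fun k => by
    have : ((k + q : ℕ) : ℝ) * π * (p / q) = k * π * (p / q) + p * π := by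
      push_cast; field_simp
    simp only [g, this, sinSlope_periodic.int_mul p _]
  have hrefl : ∀ k ≤ q, g (q - k) = -g k := fun k hk => by
    have : ((q - k : ℕ) : ℝ) * π * (p / q) = p * π - k * π * (p / q) := by
      rw [Nat.cast_sub hk]; field_simp
    simp only [g, this, sinSlope_periodic.int_mul_sub_eq, sinSlope_neg]
  have hg0 : g 0 = 0 := by simp [g, sinSlope]
  have hz : ∑ k ∈ range q, g k = 0 := by
    have hgq : g q = 0 := by simpa [hg0] using hper 0
    have := sum_range_eq_zero_of_reflect hrefl
    rwa [sum_range_succ, hgq, add_zero] at this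
  have hIcc : ∑ k ∈ Icc 1 n, g k = ∑ k ∈ range (n + 1), g k := by
    rw [← Ico_add_one_right_eq_Icc, range_eq_Ico, sum_eq_sum_Ico_succ_bot n.succ_pos, hg0,
      zero_add]
    rfl
  rw [hIcc]
  exact abs_sum_range_le_of_periodic hper hz hq (fun k => abs_sinSlope_le_one _) (n + 1)

lemma div_le_card_sin_eq_zero (p : ℤ) (q n : ℕ) :
    n / q ≤ #((Icc 1 n).filter fun k : ℕ => sin (k * π * (p / q)) = 0) := by
  rw [← Nat.Ioc_filter_dvd_card_eq_div, ← Icc_add_one_left_eq_Ioc, zero_add]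
  refine card_le_card (monotone_filter_right _ fun k _ hk => ?_)
  obtain ⟨j, rfl⟩ := hk
  rcases eq_or_ne q 0 with rfl | hq
  · simp
  · have : ((q * j : ℕ) : ℝ) * π * (p / q) = (j * p : ℤ) * π := by
      push_cast; field_simp
    rw [this]
    exact sin_int_mul_pi _

lemma f_add_sub_f_ge_of_rat (p : ℤ) {q n : ℕ} (hq : 1 ≤ q) (hn : q ^ 2 ≤ n) {t : ℝ}
    (ht : n * π * |t| ≤ 1) :
    π * |t| - n ^ 2 * π ^ 2 * t ^ 2 ≤ f n (p / q + t) - f n (p / q) := by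
  have hqn : q ≤ n / q := (Nat.le_div_iff_mul_le hq).mpr (by rwa [← sq])
  have hcard : (q : ℝ) ≤ #((Icc 1 n).filter fun k : ℕ => sin (k * π * (p / q)) = 0) := by
    exact_mod_cast hqn.trans (div_le_card_sin_eq_zero p q n)
  have hslope := neg_abs_le (π * t * ∑ k ∈ Icc 1 n, sinSlope (k * π * (p / q)))
  rw [abs_mul, abs_mul, abs_of_pos pi_pos] at hslope
  have := mul_le_mul_of_nonneg_left (abs_sum_sinSlope_le p hq n) (by positivity : 0 ≤ π * |t|)
  have := mul_le_mul_of_nonneg_left hcard (by positivity : 0 ≤ π * |t|)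
  linarith [f_add_sub_f_ge n (p / q) ht]

theorem stmt_7_general (p : ℤ) (q : ℕ) (hq : 1 ≤ q)
    (n : ℕ) (hn : q ^ 2 ≤ n) :
    ∃ δ > 0, ∀ x : ℝ, 0 < |x - (p : ℝ) / q| → |x - (p : ℝ) / q| < δ →
      f n ((p : ℝ) / q) < f n x := by
  have hn0 : 0 < n := lt_of_lt_of_le (by positivity) hn
  refine ⟨1 / (π * n ^ 2), by positivity, fun x ht0 htδ => ?_⟩
  set t := x - p / q
  have hnt : n ^ 2 * π * |t| < 1 := by
    rw [lt_div_iff₀ (by positivity)] at htδ; linarith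
  have hnt' : n * π * |t| ≤ 1 :=
    calc (n : ℝ) * π * |t| ≤ n ^ 2 * π * |t| := by
          gcongr; exact_mod_cast Nat.le_self_pow two_ne_zero n
      _ ≤ 1 := hnt.le
  have hlower := f_add_sub_f_ge_of_rat p hq hn hnt'
  rw [add_sub_cancel] at hlower
  have hpos : 0 < π * |t| * (1 - n ^ 2 * π * |t|) := mul_pos (by positivity) (by linarith)
  have : π * |t| * (1 - n ^ 2 * π * |t|) = π * |t| - n ^ 2 * π ^ 2 * t ^ 2 := by
    rw [← sq_abs t]; ring
  linarith

theorem stmt_7 (p : ℤ) (q : ℕ) (hq : 1 ≤ q) (hpq : Int.gcd p q = 1)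
    (n : ℕ) (hn : q ^ 2 ≤ n) :
    ∃ δ > 0, ∀ x : ℝ, 0 < |x - (p : ℝ) / q| → |x - (p : ℝ) / q| < δ →
      f n ((p : ℝ) / q) < f n x :=
  stmt_7_general p q hq n hn
end
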